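/- For every m ≥ 2 and k ≥ 2: every truth assignment satisfying all formulas of the k-DNF set W_m assigns the value true to at most one of the variables x_1, …, x_{m(k−1)} (i.e., the x-part has Hamming weight at most 1). -/
import Mathlib


namespace PaperKDNF

/-- A literal: a propositional variable together with a polarity
(`true` means the variable occurs unnegated). -/
abbrev Lit (V : Type) := V × Bool

/-- A term: a conjunction of literals, represented as a finite set of literals.
The empty term is the constant true. -/
abbrev Trm (V : Type) := Finset (Lit V)

/-- A DNF formula: a disjunction of terms, represented as a finite set of terms. -/
abbrev DNF (V : Type) := Finset (Trm V)

/-- A DNF set: a finite set of DNF formulas, interpreted as their conjunction. -/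
abbrev DNFSet (V : Type) := Finset (DNF V)

/-- Evaluation of a literal under a truth assignment. -/
def litEval {V : Type} (α : V → Bool) (l : Lit V) : Bool :=
  if l.2 then α l.1 else !(α l.1)

/-- A term is satisfied iff all its literals are true. -/
def trmSat {V : Type} (α : V → Bool) (t : Trm V) : Prop :=
  ∀ l ∈ t, litEval α l = true

/-- A DNF formula is satisfied iff some term in it is satisfied. -/
def dnfSat {V : Type} (α : V → Bool) (F : DNF V) : Prop :=
  ∃ t ∈ F, trmSat α t

/-- A DNF set is satisfied iff every formula in it is satisfied. -/
def setSat {V : Type} (α : V → Bool) (D : DNFSet V) : Prop :=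
  ∀ F ∈ D, dnfSat α F

/-- A DNF set is satisfiable iff some truth assignment satisfies it. -/
def Satisfiable {V : Type} (D : DNFSet V) : Prop :=
  ∃ α : V → Bool, setSat α D

/-- A `k`-DNF formula: all terms have at most `k` literals. -/
def IsKDNF {V : Type} (k : ℕ) (F : DNF V) : Prop :=
  ∀ t ∈ F, t.card ≤ k

/-- A `k`-DNF set: a finite set of `k`-DNF formulas. -/
def IsKDNFSet {V : Type} (k : ℕ) (D : DNFSet V) : Prop :=
  ∀ F ∈ D, IsKDNF k F

/-- The variables occurring in a term. -/
def trmVars {V : Type} [DecidableEq V] (t : Trm V) : Finset V :=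
  t.image Prod.fst

/-- The variables occurring in a DNF formula. -/
def dnfVars {V : Type} [DecidableEq V] (F : DNF V) : Finset V :=
  F.biUnion trmVars

/-- The variables occurring in a DNF set. -/
def setVars {V : Type} [DecidableEq V] (D : DNFSet V) : Finset V :=
  D.biUnion dnfVars

/-- The DNF set obtained from `D` by replacing the term `t` of the formula `F ∈ D`
by the term `t'`. -/
def weaken {V : Type} [DecidableEq V] (D : DNFSet V) (F : DNF V) (t t' : Trm V) :
    DNFSet V :=
  insert (insert t' (F.erase t)) (D.erase F)

/-- A DNF set is minimally unsatisfiable iff it is unsatisfiable and replacing any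
single term `t` appearing in a formula `F` of the set by any proper subterm `t'` of
`t` (obtained by deleting at least one literal; the empty term is the constant true)
yields a satisfiable set. -/
def MinUnsat {V : Type} [DecidableEq V] (D : DNFSet V) : Prop :=
  ¬ Satisfiable D ∧
    ∀ F ∈ D, ∀ t ∈ F, ∀ t' ⊂ t, Satisfiable (weaken D F t t')

/-- Indices of the `j`-th block `X_j = {x_{(j-1)(k-1)+1}, …, x_{j(k-1)}}` (1-based). -/
def blockX (k j : ℕ) : Finset ℕ := Finset.Ioc ((j-1)*(k-1)) (j*(k-1))

/-- The term `⋀_{i ∈ B} ¬x_i`. -/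
def negBlockTerm {V : Type} [DecidableEq V] (xv : ℕ → V) (B : Finset ℕ) : Trm V :=
  B.image (fun i => (xv i, false))

/-- The term `⋀_{i' ∈ B, i' ≠ i} ¬x_{i'}`. -/
def almostNegTerm {V : Type} [DecidableEq V] (xv : ℕ → V) (B : Finset ℕ) (i : ℕ) :
    Trm V :=
  (B.erase i).image (fun i' => (xv i', false))

/-- Formulas (i)–(ii) of `W_m`: `¬u_j ∨ (u_{j-1} ∧ ⋀_{x ∈ X_j} ¬x)` for
`1 ≤ j ≤ m-1` (for `j = 1` the conjunct `u_{j-1}` is absent). -/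
def Wu {V : Type} [DecidableEq V] (k : ℕ) (xv uv : ℕ → V) (j : ℕ) : DNF V :=
  { {(uv j, false)},
    (if j = 1 then (∅ : Trm V) else {(uv (j-1), true)}) ∪ negBlockTerm xv (blockX k j) }

/-- Formulas (iii)–(iv) of `W_m`:
`¬v_j ∨ u_j ∨ (v_{j-1} ∧ ⋀_{x ∈ X_j} ¬x) ∨ ⋁_{x ∈ X_j} (u_{j-1} ∧ ⋀_{x' ∈ X_j, x' ≠ x} ¬x')`
for `1 ≤ j ≤ m-1` (for `j = 1` the term containing `v_{j-1}` and the conjuncts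
`u_{j-1}` are absent). -/
def Wv {V : Type} [DecidableEq V] (k : ℕ) (xv uv vv : ℕ → V) (j : ℕ) : DNF V :=
  ({ {(vv j, false)}, {(uv j, true)} } : DNF V) ∪
  (if j = 1 then (∅ : DNF V)
    else {insert (vv (j-1), true) (negBlockTerm xv (blockX k j))}) ∪
  (blockX k j).image (fun i =>
    (if j = 1 then (∅ : Trm V) else {(uv (j-1), true)}) ∪ almostNegTerm xv (blockX k j) i)

/-- Formula (v) of `W_m`:
`(v_{m-1} ∧ ⋀_{x ∈ X_m} ¬x) ∨ ⋁_{x ∈ X_m} (u_{m-1} ∧ ⋀_{x' ∈ X_m, x' ≠ x} ¬x')`. -/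
def Wlast {V : Type} [DecidableEq V] (m k : ℕ) (xv uv vv : ℕ → V) : DNF V :=
  insert (insert (vv (m-1), true) (negBlockTerm xv (blockX k m)))
    ((blockX k m).image (fun i =>
      insert (uv (m-1), true) (almostNegTerm xv (blockX k m) i)))

/-- The `k`-DNF set `W_m`, over the `x`-variables `xv 1, …, xv (m(k-1))` and the
auxiliary variables `uv 1, …, uv (m-1)` and `vv 1, …, vv (m-1)`. -/
def Wset {V : Type} [DecidableEq V] (m k : ℕ) (xv uv vv : ℕ → V) : DNFSet V :=
  (Finset.Icc 1 (m-1)).image (Wu k xv uv) ∪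
  (Finset.Icc 1 (m-1)).image (Wv k xv uv vv) ∪
  {Wlast m k xv uv vv}

/-- The variables of `W_m`: the `x`-variables and the auxiliary `u`- and
`v`-variables. -/
inductive WVar where
  | x : ℕ → WVar
  | u : ℕ → WVar
  | v : ℕ → WVar
deriving DecidableEq

/-- The `k`-DNF set `W_m` over the variables `WVar`. -/
def WmSet (m k : ℕ) : DNFSet WVar := Wset m k WVar.x WVar.u WVar.v

/-- The Hamming weight of the `x`-part of a truth assignment: the number of the
variables `x_1, …, x_{m(k-1)}` assigned true. -/
def xWeight (m k : ℕ) (α : WVar → Bool) : ℕ :=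
  ((Finset.Icc 1 (m*(k-1))).filter (fun i => α (WVar.x i) = true)).card

section Aux

variable (α : WVar → Bool)

/-- Weight of the x-part on a finite index set. -/
def wB (B : Finset ℕ) : ℕ := (B.filter (fun i => α (WVar.x i) = true)).card

lemma wB_eq_zero {B : Finset ℕ} (h : ∀ i ∈ B, α (WVar.x i) = false) : wB α B = 0 := by
  simp only [wB, Finset.card_eq_zero, Finset.filter_eq_empty_iff]
  intro i hi
  simp [h i hi]

lemma wB_le_one {B : Finset ℕ} {i : ℕ}
    (h : ∀ i' ∈ B, i' ≠ i → α (WVar.x i') = false) : wB α B ≤ 1 := by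
  have hsub : B.filter (fun i => α (WVar.x i) = true) ⊆ {i} := by
    intro j hj
    simp only [Finset.mem_filter] at hj
    simp only [Finset.mem_singleton]
    by_contra hne
    have := h j hj.1 hne
    simp [this] at hj
  calc wB α B ≤ ({i} : Finset ℕ).card := Finset.card_le_card hsub
    _ = 1 := Finset.card_singleton i

lemma wB_union_le (B C : Finset ℕ) : wB α (B ∪ C) ≤ wB α B + wB α C := by
  simp only [wB, Finset.filter_union]
  exact Finset.card_union_le _ _

lemma trmSat_neg_x {B : Finset ℕ} (h : trmSat α (negBlockTerm WVar.x B)) :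
    ∀ i ∈ B, α (WVar.x i) = false := by
  intro i hi
  have := h (WVar.x i, false) (Finset.mem_image_of_mem _ hi)
  simpa [litEval] using this

lemma trmSat_almost {B : Finset ℕ} {i : ℕ} (h : trmSat α (almostNegTerm WVar.x B i)) :
    ∀ i' ∈ B, i' ≠ i → α (WVar.x i') = false := by
  intro i' hi' hne
  have := h (WVar.x i', false)
    (Finset.mem_image_of_mem _ (Finset.mem_erase.mpr ⟨hne, hi'⟩))
  simpa [litEval] using this

lemma Wu_sem {k j : ℕ} (h : dnfSat α (Wu k WVar.x WVar.u j)) (hu : α (WVar.u j) = true) :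
    (j ≠ 1 → α (WVar.u (j-1)) = true) ∧ ∀ i ∈ blockX k j, α (WVar.x i) = false := by
  obtain ⟨t, ht, hs⟩ := h
  simp only [Wu, Finset.mem_insert, Finset.mem_singleton] at ht
  rcases ht with rfl | rfl
  · have := hs (WVar.u j, false) (Finset.mem_singleton_self _)
    simp [litEval, hu] at this
  · refine ⟨?_, ?_⟩
    · intro hj
      have := hs (WVar.u (j-1), true) (Finset.mem_union_left _ (by simp [hj]))
      simpa [litEval] using this
    · exact trmSat_neg_x α (fun l hl => hs l (Finset.mem_union_right _ hl))

lemma Wv_sem {k j : ℕ} (h : dnfSat α (Wv k WVar.x WVar.u WVar.v j))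
    (hv : α (WVar.v j) = true) :
    α (WVar.u j) = true ∨
    (j ≠ 1 ∧ α (WVar.v (j-1)) = true ∧ ∀ i ∈ blockX k j, α (WVar.x i) = false) ∨
    (∃ i ∈ blockX k j, (j ≠ 1 → α (WVar.u (j-1)) = true) ∧
      ∀ i' ∈ blockX k j, i' ≠ i → α (WVar.x i') = false) := by
  obtain ⟨t, ht, hs⟩ := h
  simp only [Wv, Finset.mem_union, Finset.mem_insert, Finset.mem_singleton,
    Finset.mem_image] at ht
  rcases ht with ((rfl | rfl) | hif) | ⟨i, hi, rfl⟩
  · exfalso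
    have := hs (WVar.v j, false) (Finset.mem_singleton_self _)
    simp [litEval, hv] at this
  · left
    have := hs (WVar.u j, true) (Finset.mem_singleton_self _)
    simpa [litEval] using this
  · right; left
    by_cases hj : j = 1
    · simp [hj] at hif
    · simp only [hj, if_false, Finset.mem_singleton] at hif
      subst hif
      refine ⟨hj, ?_, ?_⟩
      · have := hs (WVar.v (j-1), true) (Finset.mem_insert_self _ _)
        simpa [litEval] using this
      · exact trmSat_neg_x α (fun l hl => hs l (Finset.mem_insert_of_mem hl))
  · right; right
    refine ⟨i, hi, ?_, ?_⟩
    · intro hj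
      have := hs (WVar.u (j-1), true) (Finset.mem_union_left _ (by simp [hj]))
      simpa [litEval] using this
    · exact trmSat_almost α (fun l hl => hs l (Finset.mem_union_right _ hl))

lemma Wlast_sem {m k : ℕ} (h : dnfSat α (Wlast m k WVar.x WVar.u WVar.v)) :
    (α (WVar.v (m-1)) = true ∧ ∀ i ∈ blockX k m, α (WVar.x i) = false) ∨
    (∃ i ∈ blockX k m, α (WVar.u (m-1)) = true ∧
      ∀ i' ∈ blockX k m, i' ≠ i → α (WVar.x i') = false) := by
  obtain ⟨t, ht, hs⟩ := h
  simp only [Wlast, Finset.mem_insert, Finset.mem_image] at ht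
  rcases ht with rfl | ⟨i, hi, rfl⟩
  · left
    refine ⟨?_, ?_⟩
    · have := hs (WVar.v (m-1), true) (Finset.mem_insert_self _ _)
      simpa [litEval] using this
    · exact trmSat_neg_x α (fun l hl => hs l (Finset.mem_insert_of_mem hl))
  · right
    refine ⟨i, hi, ?_, ?_⟩
    · have := hs (WVar.u (m-1), true) (Finset.mem_insert_self _ _)
      simpa [litEval] using this
    · exact trmSat_almost α (fun l hl => hs l (Finset.mem_insert_of_mem hl))

lemma Wu_mem {m k j : ℕ} (hj : j ∈ Finset.Icc 1 (m-1)) :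
    Wu k WVar.x WVar.u j ∈ WmSet m k := by
  simp only [WmSet, Wset, Finset.mem_union, Finset.mem_image, Finset.mem_singleton]
  exact Or.inl (Or.inl ⟨j, hj, rfl⟩)

lemma Wv_mem {m k j : ℕ} (hj : j ∈ Finset.Icc 1 (m-1)) :
    Wv k WVar.x WVar.u WVar.v j ∈ WmSet m k := by
  simp only [WmSet, Wset, Finset.mem_union, Finset.mem_image, Finset.mem_singleton]
  exact Or.inl (Or.inr ⟨j, hj, rfl⟩)

lemma Wlast_mem {m k : ℕ} : Wlast m k WVar.x WVar.u WVar.v ∈ WmSet m k := by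
  simp [WmSet, Wset]

lemma blockX_succ (k n : ℕ) : blockX k (n+1) = Finset.Ioc (n*(k-1)) ((n+1)*(k-1)) := by
  simp [blockX]

lemma Ioc_split (k n : ℕ) :
    Finset.Ioc 0 ((n+1)*(k-1)) = Finset.Ioc 0 (n*(k-1)) ∪ blockX k (n+1) := by
  rw [blockX_succ]
  exact (Finset.Ioc_union_Ioc_eq_Ioc (Nat.zero_le _)
    (Nat.mul_le_mul_right _ (Nat.le_succ n))).symm

end Aux

/-- For every `m ≥ 2` and `k ≥ 2`: every truth assignment
satisfying all formulas of the `k`-DNF set `W_m` assigns the value true to at most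
one of the variables `x_1, …, x_{m(k-1)}`. -/
theorem Wset_sat_weight_le_one (m k : ℕ) (hm : 2 ≤ m) (hk : 2 ≤ k)
    (α : WVar → Bool) (hα : setSat α (WmSet m k)) :
    xWeight m k α ≤ 1 := by
  -- u_j true forces blocks 1..j to be all false
  have hU : ∀ j, 1 ≤ j → j ≤ m - 1 → α (WVar.u j) = true →
      ∀ i ∈ Finset.Ioc 0 (j*(k-1)), α (WVar.x i) = false := by
    intro j
    induction j with
    | zero => intro h; omega
    | succ n ih =>
      intro _ hle hu i hi
      obtain ⟨hprev, hblk⟩ := Wu_sem α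
        (hα _ (Wu_mem (Finset.mem_Icc.mpr ⟨by omega, hle⟩))) hu
      by_cases hn : n = 0
      · subst hn
        exact hblk i (by simpa [blockX] using hi)
      · have hun : α (WVar.u n) = true := by simpa using hprev (by omega)
        have hi' := Finset.mem_Ioc.mp hi
        by_cases hle2 : i ≤ n*(k-1)
        · exact ih (by omega) (by omega) hun i (Finset.mem_Ioc.mpr ⟨hi'.1, hle2⟩)
        · refine hblk i ?_
          rw [blockX_succ, Finset.mem_Ioc]
          exact ⟨lt_of_not_ge hle2, hi'.2⟩
  -- v_j true forces blocks 1..j to have weight ≤ 1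
  have hV : ∀ j, 1 ≤ j → j ≤ m - 1 → α (WVar.v j) = true →
      wB α (Finset.Ioc 0 (j*(k-1))) ≤ 1 := by
    intro j
    induction j with
    | zero => intro h; omega
    | succ n ih =>
      intro _ hle hv
      have hd := Wv_sem α (hα _ (Wv_mem (Finset.mem_Icc.mpr ⟨by omega, hle⟩))) hv
      rcases hd with hu | ⟨hj1, hvp, hblk⟩ | ⟨i, hi, hup, halmost⟩
      · have h0 : wB α (Finset.Ioc 0 ((n+1)*(k-1))) = 0 :=
          wB_eq_zero α (hU (n+1) (by omega) hle hu)
        omega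
      · have hn : 1 ≤ n := by omega
        have h1 : wB α (Finset.Ioc 0 (n*(k-1))) ≤ 1 :=
          ih hn (by omega) (by simpa using hvp)
        have h2 : wB α (blockX k (n+1)) = 0 := wB_eq_zero α hblk
        have h3 := wB_union_le α (Finset.Ioc 0 (n*(k-1))) (blockX k (n+1))
        rw [Ioc_split]
        omega
      · by_cases hn : n = 0
        · subst hn
          have h1 : wB α (blockX k 1) ≤ 1 := wB_le_one α halmost
          simpa [blockX] using h1
        · have hun : α (WVar.u n) = true := by simpa using hup (by omega)
          have h1 : wB α (Finset.Ioc 0 (n*(k-1))) = 0 :=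
            wB_eq_zero α (hU n (by omega) (by omega) hun)
          have h2 : wB α (blockX k (n+1)) ≤ 1 := wB_le_one α halmost
          have h3 := wB_union_le α (Finset.Ioc 0 (n*(k-1))) (blockX k (n+1))
          rw [Ioc_split]
          omega
  -- conclude from the last formula
  have hxw : xWeight m k α = wB α (Finset.Ioc 0 (m*(k-1))) := by
    have : Finset.Icc 1 (m*(k-1)) = Finset.Ioc 0 (m*(k-1)) := by
      ext i; simp [Nat.lt_iff_add_one_le]
    simp [xWeight, wB, this]
  have hmsplit : Finset.Ioc 0 (m*(k-1)) =
      Finset.Ioc 0 ((m-1)*(k-1)) ∪ blockX k m := by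
    have hm1 : m - 1 + 1 = m := by omega
    rw [← hm1, Ioc_split]
    simp
  have h3 := wB_union_le α (Finset.Ioc 0 ((m-1)*(k-1))) (blockX k m)
  rcases Wlast_sem α (hα _ Wlast_mem) with ⟨hvlast, hblk⟩ | ⟨i, hi, hulast, halmost⟩
  · have h1 : wB α (Finset.Ioc 0 ((m-1)*(k-1))) ≤ 1 :=
      hV (m-1) (by omega) le_rfl hvlast
    have h2 : wB α (blockX k m) = 0 := wB_eq_zero α hblk
    rw [hxw, hmsplit]
    omega
  · have h1 : wB α (Finset.Ioc 0 ((m-1)*(k-1))) = 0 :=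
      wB_eq_zero α (hU (m-1) (by omega) le_rfl hulast)
    have h2 : wB α (blockX k m) ≤ 1 := wB_le_one α halmost
    rw [hxw, hmsplit]
    omega

end PaperKDNF
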